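/- For every ε > 0 there exists a measurable set Ω ⊆ ℂ with infinite Lebesgue measure such that for every entire function f : ℂ → ℂ, ∫_Ω |f(z)|² e^{−π|z|²} dA(z) ≤ ε · ∫_ℂ |f(z)|² e^{−π|z|²} dA(z). -/

import Mathlib

/-!
For an entire `f`, the function `H w = f w ^ 2 * exp (π * conj z * (z - 2 * w))` is entire with
`|H w| = |f w|² e^{-π|w|²} e^{π|w - z|²}`, so the sub-mean value property of `|H|` on the unit disc
around `z` gives `π |f z|² e^{-π|z|²} ≤ e^π ∫_{D(z,1)} |f|² e^{-π|w|²} dA(w)`. Integrating this over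
a set `Ω` and exchanging the integrals bounds `∫_Ω |f|² dλ` by
`(e^π / π) · sup_w |D(w,1) ∩ Ω| · ∫_ℂ |f|² dλ`. For `Ω` the union of the discs of a small radius `ρ`
centred at the points of `4ℤ²`, each unit disc meets at most one of them, so the factor is
`e^π ρ²`, while `Ω` has infinite measure.
-/

open MeasureTheory Set Metric Real
open scoped ENNReal ComplexConjugate

section MeanValue

variable {E : Type*} [NormedAddCommGroup E]

theorem two_pi_smul_circleAverage_eq_setIntegral_Ioo [NormedSpace ℝ E] (f : ℂ → E) (c : ℂ)
    (R : ℝ) : (2 * π) • circleAverage f c R = ∫ θ in Ioo (-π) π, f (circleMap c R θ) := by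
  have hper : Function.Periodic (fun θ ↦ f (circleMap c R θ)) (2 * π) := fun θ ↦ by
    simp only [periodic_circleMap c R θ]
  rw [circleAverage_def, smul_smul, mul_inv_cancel₀ two_pi_pos.ne', one_smul,
    ← integral_Ioc_eq_integral_Ioo, ← intervalIntegral.integral_of_le (by linarith [pi_pos])]
  simpa [two_mul] using hper.intervalIntegral_add_eq 0 (-π)

variable [NormedSpace ℂ E] [CompleteSpace E] {f : ℂ → E} {c : ℂ}

theorem DiffContOnCl.ofReal_two_pi_mul_enorm_le_setLIntegral {R : ℝ}
    (hf : DiffContOnCl ℂ f (ball c |R|)) :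
    ENNReal.ofReal (2 * π) * ‖f c‖ₑ ≤ ∫⁻ θ in Ioo (-π) π, ‖f (circleMap c R θ)‖ₑ := by
  calc ENNReal.ofReal (2 * π) * ‖f c‖ₑ = ‖(2 * π) • Real.circleAverage f c R‖ₑ := by
        rw [hf.circleAverage, enorm_smul, Real.enorm_of_nonneg two_pi_pos.le]
    _ ≤ ∫⁻ θ in Ioo (-π) π, ‖f (circleMap c R θ)‖ₑ := by
        rw [two_pi_smul_circleAverage_eq_setIntegral_Ioo]
        exact enorm_integral_le_lintegral_enorm _

theorem add_polarCoord_symm_eq_circleMap (c : ℂ) (p : ℝ × ℝ) :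
    c + Complex.polarCoord.symm p = circleMap c p.1 p.2 := by
  simp [circleMap, Complex.exp_mul_I]

theorem setLIntegral_Ioo_ofReal {r : ℝ} (hr : 0 ≤ r) :
    ∫⁻ s in Ioo 0 r, ENNReal.ofReal s = ENNReal.ofReal (r ^ 2 / 2) := by
  have hint : IntegrableOn (fun s : ℝ ↦ s) (Ioo 0 r) :=
    continuous_id.integrableOn_Icc.mono_set Ioo_subset_Icc_self
  rw [← ofReal_integral_eq_lintegral_ofReal hint
      (ae_restrict_of_forall_mem measurableSet_Ioo fun s hs ↦ hs.1.le),
    ← integral_Ioc_eq_integral_Ioo, ← intervalIntegral.integral_of_le hr, integral_id]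
  simp

theorem circleMap_mem_ball (c : ℂ) {R s : ℝ} (hs : |s| < R) (θ : ℝ) :
    circleMap c s θ ∈ ball c R := by
  rwa [mem_ball, dist_eq_norm, circleMap_sub_center, norm_circleMap_zero]

theorem setLIntegral_Ioo_prod_circleMap_le_setLIntegral_ball (g : ℂ → ℝ≥0∞) (c : ℂ) (r : ℝ) :
    ∫⁻ p in Ioo 0 r ×ˢ Ioo (-π) π, ENNReal.ofReal p.1 * g (circleMap c p.1 p.2) ≤
      ∫⁻ w in ball c r, g w := by
  have hpolar : ∫⁻ w in ball c r, g w = ∫⁻ p in polarCoord.target,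
      ENNReal.ofReal p.1 • (ball c r).indicator g (c + Complex.polarCoord.symm p) := by
    rw [Complex.lintegral_comp_polarCoord_symm fun w ↦ (ball c r).indicator g (c + w),
      lintegral_add_left_eq_self, lintegral_indicator measurableSet_ball]
  rw [hpolar]
  refine le_of_eq_of_le (setLIntegral_congr_fun (measurableSet_Ioo.prod measurableSet_Ioo) ?_)
    (lintegral_mono_set (prod_mono (fun s hs ↦ hs.1) subset_rfl))
  rintro ⟨s, θ⟩ ⟨hs, -⟩
  dsimp only
  rw [add_polarCoord_symm_eq_circleMap, indicator_of_mem
    (circleMap_mem_ball c ((abs_of_pos hs.1).trans_lt hs.2) θ)]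
  rfl

theorem DifferentiableOn.volume_ball_mul_enorm_le_setLIntegral {r : ℝ}
    (hf : DifferentiableOn ℂ f (ball c r)) :
    volume (ball c r) * ‖f c‖ₑ ≤ ∫⁻ w in ball c r, ‖f w‖ₑ := by
  rcases le_or_gt r 0 with hr | hr
  · simp [ENNReal.ofReal_of_nonpos hr]
  have hmeas : AEMeasurable (fun p : ℝ × ℝ ↦ ENNReal.ofReal p.1 * ‖f (circleMap c p.1 p.2)‖ₑ)
      ((volume.restrict (Ioo 0 r)).prod (volume.restrict (Ioo (-π) π))) := by
    have hcm : Continuous fun p : ℝ × ℝ ↦ circleMap c p.1 p.2 := by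
      unfold circleMap; fun_prop
    have hmaps : MapsTo (fun p : ℝ × ℝ ↦ circleMap c p.1 p.2) (Ioo 0 r ×ˢ Ioo (-π) π)
        (ball c r) := fun p hp ↦ circleMap_mem_ball c ((abs_of_pos hp.1.1).trans_lt hp.1.2) p.2
    rw [Measure.prod_restrict, ← Measure.volume_eq_prod]
    exact measurable_fst.ennreal_ofReal.aemeasurable.mul
      ((hf.continuousOn.enorm.comp hcm.continuousOn hmaps).aemeasurable
        (measurableSet_Ioo.prod measurableSet_Ioo))
  have hcircle : ∀ s ∈ Ioo 0 r, ENNReal.ofReal s * (ENNReal.ofReal (2 * π) * ‖f c‖ₑ) ≤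
      ∫⁻ θ in Ioo (-π) π, ENNReal.ofReal s * ‖f (circleMap c s θ)‖ₑ := by
    intro s hs
    rw [lintegral_const_mul' _ _ ENNReal.ofReal_ne_top]
    gcongr
    refine DiffContOnCl.ofReal_two_pi_mul_enorm_le_setLIntegral (hf.diffContOnCl_ball ?_)
    rw [abs_of_pos hs.1]
    exact closedBall_subset_ball hs.2
  calc volume (ball c r) * ‖f c‖ₑ
      = ∫⁻ s in Ioo 0 r, ENNReal.ofReal s * (ENNReal.ofReal (2 * π) * ‖f c‖ₑ) := by
        rw [lintegral_mul_const' _ _ (by finiteness), setLIntegral_Ioo_ofReal hr.le,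
          ← mul_assoc, ← ENNReal.ofReal_mul (by positivity), Complex.volume_ball,
          ← ENNReal.ofReal_pow hr.le, ← ENNReal.ofReal_coe_nnreal, NNReal.coe_real_pi,
          ← ENNReal.ofReal_mul (by positivity)]
        ring_nf
    _ ≤ ∫⁻ s in Ioo 0 r, ∫⁻ θ in Ioo (-π) π, ENNReal.ofReal s * ‖f (circleMap c s θ)‖ₑ :=
        setLIntegral_mono' measurableSet_Ioo hcircle
    _ = ∫⁻ p in Ioo 0 r ×ˢ Ioo (-π) π, ENNReal.ofReal p.1 * ‖f (circleMap c p.1 p.2)‖ₑ := by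
        rw [Measure.volume_eq_prod, ← Measure.prod_restrict, lintegral_prod _ hmeas]
    _ ≤ ∫⁻ w in ball c r, ‖f w‖ₑ := setLIntegral_Ioo_prod_circleMap_le_setLIntegral_ball _ c r

end MeanValue

theorem norm_cexp_pi_conj_mul_sub_two_mul (z w : ℂ) :
    ‖Complex.exp (π * conj z * (z - 2 * w))‖ = rexp (-π * ‖w‖ ^ 2) * rexp (π * ‖w - z‖ ^ 2) := by
  rw [Complex.norm_exp, ← Real.exp_add]
  congr 1
  simp only [Complex.sq_norm, Complex.normSq_apply, Complex.mul_re, Complex.mul_im,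
    Complex.sub_re, Complex.sub_im, Complex.conj_re, Complex.conj_im, Complex.ofReal_re,
    Complex.ofReal_im, Complex.re_ofNat, Complex.im_ofNat]
  ring

theorem Differentiable.volume_ball_mul_norm_sq_mul_exp_le {f : ℂ → ℂ}
    (hf : Differentiable ℂ f) (z : ℂ) (r : ℝ) :
    volume (ball z r) * ENNReal.ofReal (‖f z‖ ^ 2 * rexp (-π * ‖z‖ ^ 2)) ≤
      ENNReal.ofReal (rexp (π * r ^ 2)) *
        ∫⁻ w in ball z r, ENNReal.ofReal (‖f w‖ ^ 2 * rexp (-π * ‖w‖ ^ 2)) := by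
  set H : ℂ → ℂ := fun w ↦ f w ^ 2 * Complex.exp (π * conj z * (z - 2 * w))
  have hH : ∀ w, ‖H w‖ₑ = ENNReal.ofReal (‖f w‖ ^ 2 * rexp (-π * ‖w‖ ^ 2)) *
      ENNReal.ofReal (rexp (π * ‖w - z‖ ^ 2)) := by
    intro w
    rw [← ofReal_norm, norm_mul, norm_pow, norm_cexp_pi_conj_mul_sub_two_mul, ← mul_assoc,
      ENNReal.ofReal_mul (by positivity)]
  have hHd : Differentiable ℂ H := by fun_prop
  calc volume (ball z r) * ENNReal.ofReal (‖f z‖ ^ 2 * rexp (-π * ‖z‖ ^ 2))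
      = volume (ball z r) * ‖H z‖ₑ := by simp [hH]
    _ ≤ ∫⁻ w in ball z r, ‖H w‖ₑ := hHd.differentiableOn.volume_ball_mul_enorm_le_setLIntegral
    _ ≤ ∫⁻ w in ball z r, ENNReal.ofReal (‖f w‖ ^ 2 * rexp (-π * ‖w‖ ^ 2)) *
          ENNReal.ofReal (rexp (π * r ^ 2)) := by
        refine setLIntegral_mono' measurableSet_ball fun w hw ↦ ?_
        rw [hH]
        gcongr
        exact (mem_ball_iff_norm.1 hw).le
    _ = _ := by rw [lintegral_mul_const' _ _ ENNReal.ofReal_ne_top, mul_comm]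

theorem mul_setLIntegral_le_of_le_setLIntegral_ball {X : Type*} [PseudoMetricSpace X]
    [MeasurableSpace X] [OpensMeasurableSpace X] [SecondCountableTopology X]
    {μ : Measure X} [SFinite μ] {U : X → ℝ≥0∞} (hU : Measurable U) {a C δ : ℝ≥0∞} {r : ℝ}
    (hmean : ∀ z, a * U z ≤ C * ∫⁻ w in ball z r, U w ∂μ) {Ω : Set X}
    (hΩ : ∀ w, μ (ball w r ∩ Ω) ≤ δ) :
    a * ∫⁻ z in Ω, U z ∂μ ≤ C * δ * ∫⁻ z, U z ∂μ := by
  set K : X × X → ℝ≥0∞ := {p | dist p.2 p.1 < r}.indicator (U ∘ Prod.snd)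
  have hK : Measurable K := (hU.comp measurable_snd).indicator
    (isOpen_lt (continuous_snd.dist continuous_fst) continuous_const).measurableSet
  have hball : ∀ z, ∫⁻ w in ball z r, U w ∂μ = ∫⁻ w, K (z, w) ∂μ := fun z ↦
    (lintegral_indicator measurableSet_ball _).symm
  have hswap : ∫⁻ z in Ω, ∫⁻ w, K (z, w) ∂μ ∂μ = ∫⁻ w, U w * μ (ball w r ∩ Ω) ∂μ := by
    rw [lintegral_lintegral_swap (f := fun z w ↦ K (z, w)) hK.aemeasurable]
    refine lintegral_congr fun w ↦ ?_
    have hKsymm : ∀ z, K (z, w) = (ball w r).indicator (fun _ ↦ U w) z := fun z ↦ by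
      simp [K, indicator, mem_ball, dist_comm]
    simp_rw [hKsymm, lintegral_indicator_const measurableSet_ball,
      Measure.restrict_apply measurableSet_ball]
  calc a * ∫⁻ z in Ω, U z ∂μ = ∫⁻ z in Ω, a * U z ∂μ := (lintegral_const_mul a hU).symm
    _ ≤ ∫⁻ z in Ω, C * ∫⁻ w, K (z, w) ∂μ ∂μ := lintegral_mono fun z ↦ hball z ▸ hmean z
    _ = C * ∫⁻ w, U w * μ (ball w r ∩ Ω) ∂μ := by
        rw [lintegral_const_mul C hK.lintegral_prod_right', hswap]
    _ ≤ C * ∫⁻ w, U w * δ ∂μ := by gcongr with w; exact hΩ w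
    _ = C * δ * ∫⁻ z, U z ∂μ := by rw [lintegral_mul_const δ hU, mul_comm _ δ, mul_assoc]

theorem Differentiable.setLIntegral_norm_sq_mul_exp_le {f : ℂ → ℂ} (hf : Differentiable ℂ f)
    {Ω : Set ℂ} {δ : ℝ≥0∞} (hΩ : ∀ w, volume (ball w 1 ∩ Ω) ≤ NNReal.pi * δ) :
    ∫⁻ z in Ω, ENNReal.ofReal (‖f z‖ ^ 2 * rexp (-π * ‖z‖ ^ 2)) ≤
      ENNReal.ofReal (rexp π) * δ * ∫⁻ z, ENNReal.ofReal (‖f z‖ ^ 2 * rexp (-π * ‖z‖ ^ 2)) := by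
  have hU : Measurable fun z ↦ ENNReal.ofReal (‖f z‖ ^ 2 * rexp (-π * ‖z‖ ^ 2)) := by
    have := hf.continuous
    exact Measurable.ennreal_ofReal (by fun_prop)
  have key := mul_setLIntegral_le_of_le_setLIntegral_ball hU
    (fun z ↦ by simpa using hf.volume_ball_mul_norm_sq_mul_exp_le z 1) hΩ
  exact (ENNReal.mul_le_mul_iff_right (ENNReal.coe_ne_zero.2 NNReal.pi_ne_zero)
    ENNReal.coe_ne_top).1 (key.trans_eq (by ring))

theorem measure_iUnion_eq_top_of_pairwise_disjoint_of_le {X ι : Type*} [MeasurableSpace X]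
    [Countable ι] [Infinite ι] {μ : Measure X} {s : ι → Set X} (hs : ∀ i, MeasurableSet (s i))
    (hd : Pairwise (Function.onFun Disjoint s)) {δ : ℝ≥0∞} (hδ : δ ≠ 0) (hδs : ∀ i, δ ≤ μ (s i)) :
    μ (⋃ i, s i) = ⊤ := by
  rw [measure_iUnion hd hs, ← top_le_iff, ← ENNReal.tsum_const_eq_top_of_ne_zero (α := ι) hδ]
  exact ENNReal.tsum_le_tsum hδs

theorem measure_ball_inter_iUnion_closedBall_le {X ι : Type*} [PseudoMetricSpace X]
    [MeasurableSpace X] {μ : Measure X} {c : ι → X} {r ρ : ℝ}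
    (hc : Pairwise fun i j ↦ 2 * (r + ρ) ≤ dist (c i) (c j)) {δ : ℝ≥0∞}
    (hδ : ∀ i, μ (closedBall (c i) ρ) ≤ δ) (w : X) :
    μ (ball w r ∩ ⋃ i, closedBall (c i) ρ) ≤ δ := by
  rcases (ball w r ∩ ⋃ i, closedBall (c i) ρ).eq_empty_or_nonempty with h | ⟨y, hyw, hy⟩
  · simp [h]
  obtain ⟨i, hyi⟩ := mem_iUnion.1 hy
  refine (measure_mono fun x hx ↦ ?_).trans (hδ i)
  obtain ⟨hxw, hx⟩ := hx
  obtain ⟨j, hxj⟩ := mem_iUnion.1 hx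
  obtain rfl : j = i := by
    by_contra hji
    have := dist_triangle4 (c j) x w y
    have := dist_triangle (c j) y (c i)
    simp only [mem_closedBall, mem_ball] at hxj hyi hxw hyw
    linarith [hc hji, dist_comm x (c j), dist_comm w y]
  exact hxj

theorem one_le_norm_intCast_add_intCast_mul_I {k : ℤ × ℤ} (hk : k ≠ 0) :
    1 ≤ ‖(k.1 + k.2 * Complex.I : ℂ)‖ := by
  have hsq : (1 : ℤ) ≤ k.1 ^ 2 + k.2 ^ 2 := by
    rcases k with ⟨m, n⟩
    by_cases hm : m = 0
    · have hn : n ≠ 0 := fun hn ↦ hk (by simp [hm, hn])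
      nlinarith [sq_pos_of_ne_zero hn, sq_nonneg m]
    · nlinarith [sq_pos_of_ne_zero hm, sq_nonneg n]
  have := Complex.norm_add_mul_I (k.1 : ℝ) k.2
  push_cast at this
  rw [this, Real.one_le_sqrt]
  exact_mod_cast hsq

def latticeDisks (ρ : ℝ) : Set ℂ := ⋃ k : ℤ × ℤ, closedBall (4 * (k.1 + k.2 * Complex.I)) ρ

theorem four_le_dist_latticePoints {k l : ℤ × ℤ} (h : k ≠ l) :
    4 ≤ dist (4 * (k.1 + k.2 * Complex.I)) (4 * (l.1 + l.2 * Complex.I)) := by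
  have hsub : (4 * (k.1 + k.2 * Complex.I) - 4 * (l.1 + l.2 * Complex.I) : ℂ) =
      4 * ((k - l).1 + (k - l).2 * Complex.I) := by
    simp only [Prod.fst_sub, Prod.snd_sub, Int.cast_sub]
    ring
  rw [dist_eq_norm, hsub, norm_mul, Complex.norm_ofNat]
  linarith [one_le_norm_intCast_add_intCast_mul_I (sub_ne_zero.2 h)]

theorem measurableSet_latticeDisks (ρ : ℝ) : MeasurableSet (latticeDisks ρ) :=
  .iUnion fun _ ↦ measurableSet_closedBall

theorem volume_latticeDisks {ρ : ℝ} (h0 : 0 < ρ) (h2 : ρ < 2) :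
    volume (latticeDisks ρ) = ⊤ :=
  measure_iUnion_eq_top_of_pairwise_disjoint_of_le (fun _ ↦ measurableSet_closedBall)
    (fun k l hkl ↦ closedBall_disjoint_closedBall <| by linarith [four_le_dist_latticePoints hkl])
    (measure_closedBall_pos volume (0 : ℂ) h0).ne' fun k ↦ by simp

theorem volume_ball_one_inter_latticeDisks_le {ρ : ℝ} (hρ : ρ ≤ 1) (w : ℂ) :
    volume (ball w 1 ∩ latticeDisks ρ) ≤ NNReal.pi * ENNReal.ofReal ρ ^ 2 :=
  measure_ball_inter_iUnion_closedBall_le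
    (fun k l hkl ↦ by linarith [four_le_dist_latticePoints hkl]) (fun k ↦ by simp [mul_comm]) w

theorem exists_infinite_measure_set_small_concentration :
    ∀ ε : ℝ, 0 < ε → ∃ Ω : Set ℂ, MeasurableSet Ω ∧ volume Ω = ⊤ ∧
      ∀ f : ℂ → ℂ, Differentiable ℂ f →
        ∫⁻ z in Ω, ENNReal.ofReal (‖f z‖ ^ 2 * Real.exp (-Real.pi * ‖z‖ ^ 2))
          ≤ ENNReal.ofReal ε *
            ∫⁻ z : ℂ, ENNReal.ofReal (‖f z‖ ^ 2 * Real.exp (-Real.pi * ‖z‖ ^ 2)) := by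
  intro ε hε
  set ρ := min 1 (ε / rexp π)
  have hρ0 : 0 < ρ := lt_min one_pos (by positivity)
  have hρ1 : ρ ≤ 1 := min_le_left _ _
  refine ⟨latticeDisks ρ, measurableSet_latticeDisks ρ, volume_latticeDisks hρ0 (by linarith),
    fun f hf ↦ (hf.setLIntegral_norm_sq_mul_exp_le
      (volume_ball_one_inter_latticeDisks_le hρ1)).trans ?_⟩
  gcongr
  rw [← ENNReal.ofReal_pow hρ0.le, ← ENNReal.ofReal_mul (exp_pos π).le]
  refine ENNReal.ofReal_le_ofReal ?_
  calc rexp π * ρ ^ 2 ≤ rexp π * (ε / rexp π) := by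
        gcongr; nlinarith [min_le_right 1 (ε / rexp π)]
    _ = ε := mul_div_cancel₀ _ (exp_pos π).ne'
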